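/- For every α ∈ (0,1) and every T > 0 there is a constant K = K(α, T) such that for all 0 < t ≤ T and all y₁, y₂ ∈ ℝ, ∫_0^t ∫_ℝ (p_s(y₁ − z) − p_s(y₂ − z))² e^{|z|} dz ds ≤ K · e^{max(|y₁|, |y₂|)} · |y₁ − y₂|^α. -/

import Mathlib

open MeasureTheory Real Filter Topology

/-- The heat kernel `p_s(x) = (2πs)^{-1/2} exp(-x²/(2s))`. -/
noncomputable def heatKernel (s x : ℝ) : ℝ :=
  (Real.sqrt (2 * Real.pi * s))⁻¹ * Real.exp (-(x ^ 2) / (2 * s))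

/-!
Pointwise, `d = |p_s(a) - p_s(b)|` is at most `|a - b| / s` (mean value theorem, since
`|x| p_s(x) ≤ 1`), at most `s^{-1/2}`, and at most `p_s(a) + p_s(b)`; interpolating,
`d² ≤ |a - b|^α s^{-(1+α)/2} (p_s(a) + p_s(b))`. The weight costs only half of the Gaussian
exponent, `p_s(y - z) e^{|z|} ≤ √2 e^{s + |y|} p_{2s}(y - z)`, and `p_{2s}` has unit mass, so the
inner integral is `O(e^{max(|y₁|,|y₂|)} |y₁ - y₂|^α s^{-(1+α)/2})`, integrable at `s = 0` as `α < 1`.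
-/

open ProbabilityTheory

lemma le_rpow_mul_rpow_one_sub {d L M α : ℝ} (hd : 0 ≤ d) (hL : d ≤ L) (hM : d ≤ M)
    (hα0 : 0 ≤ α) (hα1 : α ≤ 1) : d ≤ L ^ α * M ^ (1 - α) :=
  calc d = d ^ α * d ^ (1 - α) := by
        rw [← rpow_add' hd (by norm_num), add_sub_cancel, rpow_one]
    _ ≤ L ^ α * M ^ (1 - α) :=
        mul_le_mul (rpow_le_rpow hd hL hα0) (rpow_le_rpow hd hM (sub_nonneg.2 hα1))
          (rpow_nonneg hd _) (rpow_nonneg (hd.trans hL) _)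

lemma sq_sub_le_rpow_mul_rpow_mul_add {u v L M α : ℝ} (hu : 0 ≤ u) (hv : 0 ≤ v)
    (hL : |u - v| ≤ L) (hM : |u - v| ≤ M) (hα0 : 0 ≤ α) (hα1 : α ≤ 1) :
    (u - v) ^ 2 ≤ L ^ α * M ^ (1 - α) * (u + v) := by
  rw [← sq_abs, sq]
  exact mul_le_mul (le_rpow_mul_rpow_one_sub (abs_nonneg _) hL hM hα0 hα1)
    (abs_sub_le_iff.2 ⟨by linarith, by linarith⟩) (abs_nonneg _)
    ((abs_nonneg _).trans (le_rpow_mul_rpow_one_sub (abs_nonneg _) hL hM hα0 hα1))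

lemma heatKernel_nonneg (s x : ℝ) : 0 ≤ heatKernel s x := by
  unfold heatKernel; positivity

lemma heatKernel_le_rpow {s : ℝ} (hs : 0 < s) (x : ℝ) : heatKernel s x ≤ s ^ (-(1 / 2) : ℝ) := by
  have hexp : exp (-(x ^ 2) / (2 * s)) ≤ 1 :=
    exp_le_one_iff.2 (div_nonpos_of_nonpos_of_nonneg (by nlinarith) (by positivity))
  have hsqrt : √s ≤ √(2 * π * s) := Real.sqrt_le_sqrt (by nlinarith [pi_gt_three])
  calc heatKernel s x ≤ (√(2 * π * s))⁻¹ * 1 := by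
        unfold heatKernel; gcongr
    _ ≤ (√s)⁻¹ := by rw [mul_one]; gcongr
    _ = s ^ (-(1 / 2) : ℝ) := by rw [Real.sqrt_eq_rpow, rpow_neg hs.le]

lemma hasDerivAt_heatKernel (s x : ℝ) :
    HasDerivAt (heatKernel s) (-(x / s) * heatKernel s x) x := by
  refine ((((hasDerivAt_pow 2 x).neg.div_const (2 * s)).exp).const_mul
    (√(2 * π * s))⁻¹).congr_deriv ?_
  simp only [heatKernel, Pi.neg_apply]
  rcases eq_or_ne s 0 with rfl | hs
  · simp
  · field_simp; ring

lemma abs_mul_heatKernel_le_one {s : ℝ} (hs : 0 < s) (x : ℝ) : |x| * heatKernel s x ≤ 1 := by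
  set q := √(2 * π * s)
  have hq : 0 < q := Real.sqrt_pos.2 (by positivity)
  have hq2 : q ^ 2 = 2 * π * s := Real.sq_sqrt (by positivity)
  -- By `e^w ≥ 1 + w` with `w = x²/(2s)` it suffices that `q x² - 2s|x| + 2sq ≥ 0`, a quadratic
  -- in `|x|` with negative discriminant `4s²(1 - 4π)`.
  have hlin : |x| ≤ q * (x ^ 2 / (2 * s) + 1) := by
    rw [mul_add, mul_one, mul_div_assoc', div_add' _ _ _ (by positivity),
      le_div_iff₀ (by positivity), ← sq_abs x]
    refine le_of_mul_le_mul_left ?_ hq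
    nlinarith [sq_nonneg (q * |x| - s), mul_lt_mul_of_pos_right pi_gt_three (mul_pos hs hs)]
  unfold heatKernel
  rw [neg_div, Real.exp_neg, ← div_eq_mul_inv, ← mul_div_assoc, div_le_one (by positivity),
    ← div_eq_mul_inv, div_le_iff₀ hq, mul_comm]
  exact hlin.trans (by gcongr; exact add_one_le_exp _)

lemma abs_heatKernel_sub_le {s : ℝ} (hs : 0 < s) (a b : ℝ) :
    |heatKernel s a - heatKernel s b| ≤ |a - b| / s := by
  have hderiv : ∀ x, ‖-(x / s) * heatKernel s x‖ ≤ 1 / s := fun x => by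
    rw [norm_eq_abs, abs_mul, abs_neg, abs_div, abs_of_pos hs,
      abs_of_nonneg (heatKernel_nonneg s x), div_mul_eq_mul_div]
    exact div_le_div_of_nonneg_right (abs_mul_heatKernel_le_one hs x) hs.le
  have := convex_univ.norm_image_sub_le_of_norm_hasDerivWithin_le
    (fun x _ => (hasDerivAt_heatKernel s x).hasDerivWithinAt) (fun x _ => hderiv x)
    (Set.mem_univ b) (Set.mem_univ a)
  rwa [norm_eq_abs, norm_eq_abs, one_div_mul_eq_div] at this

lemma sq_heatKernel_sub_le {s α : ℝ} (hs : 0 < s) (hα0 : 0 ≤ α) (hα1 : α ≤ 1) (a b : ℝ) :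
    (heatKernel s a - heatKernel s b) ^ 2 ≤
      |a - b| ^ α * s ^ (-(1 + α) / 2) * (heatKernel s a + heatKernel s b) := by
  have hM := abs_sub_le_of_nonneg_of_le (heatKernel_nonneg s a) (heatKernel_le_rpow hs a)
    (heatKernel_nonneg s b) (heatKernel_le_rpow hs b)
  convert sq_sub_le_rpow_mul_rpow_mul_add (heatKernel_nonneg s a) (heatKernel_nonneg s b)
    (abs_heatKernel_sub_le hs a b) hM hα0 hα1 using 2
  rw [div_rpow (abs_nonneg _) hs.le, ← rpow_mul hs.le, div_mul_eq_mul_div,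
    mul_div_assoc, ← rpow_sub hs]
  congr 2
  ring

lemma heatKernel_sub_eq_gaussianPDFReal {s : ℝ} (hs : 0 ≤ s) (y z : ℝ) :
    heatKernel s (y - z) = gaussianPDFReal y s.toNNReal z := by
  rw [heatKernel, gaussianPDFReal, Real.coe_toNNReal s hs, ← neg_sub z y, neg_sq]

lemma integrable_heatKernel_sub {s : ℝ} (hs : 0 ≤ s) (y : ℝ) :
    Integrable fun z => heatKernel s (y - z) := by
  simpa only [heatKernel_sub_eq_gaussianPDFReal hs] using integrable_gaussianPDFReal y _

lemma integral_heatKernel_sub {s : ℝ} (hs : 0 < s) (y : ℝ) :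
    ∫ z, heatKernel s (y - z) = 1 := by
  simpa only [heatKernel_sub_eq_gaussianPDFReal hs.le] using
    integral_gaussianPDFReal_eq_one y (by simpa using hs)

lemma heatKernel_sub_mul_exp_abs_le {s : ℝ} (hs : 0 < s) (y z : ℝ) :
    heatKernel s (y - z) * exp |z| ≤
      √2 * exp (s + |y|) * heatKernel (2 * s) (y - z) := by
  have hz : |z| ≤ |y| + |y - z| := by
    linarith [abs_sub_abs_le_abs_sub z y, abs_sub_comm z y]
  have hx : |y - z| ≤ (y - z) ^ 2 / (4 * s) + s := by
    rw [div_add' _ _ _ (by positivity), le_div_iff₀ (by positivity), ← sq_abs (y - z)]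
    nlinarith [sq_nonneg (|y - z| - 2 * s)]
  have hnorm : √2 * (√(2 * π * (2 * s)))⁻¹ = (√(2 * π * s))⁻¹ := by
    rw [show 2 * π * (2 * s) = 2 * (2 * π * s) by ring,
      Real.sqrt_mul zero_le_two, mul_inv, ← mul_assoc,
      mul_inv_cancel₀ (Real.sqrt_ne_zero'.2 zero_lt_two), one_mul]
  have hexp : -(y - z) ^ 2 / (2 * s) + |z| ≤ s + |y| + -(y - z) ^ 2 / (2 * (2 * s)) := by
    have h2 : (y - z) ^ 2 / (2 * s) = 2 * ((y - z) ^ 2 / (4 * s)) := by field_simp; ring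
    rw [neg_div, neg_div, h2, show 2 * (2 * s) = 4 * s by ring]
    linarith
  calc heatKernel s (y - z) * exp |z|
      = √2 * (√(2 * π * (2 * s)))⁻¹ * exp (-(y - z) ^ 2 / (2 * s) + |z|) := by
        rw [hnorm, exp_add, heatKernel]; ring
    _ ≤ √2 * (√(2 * π * (2 * s)))⁻¹ * exp (s + |y| + -(y - z) ^ 2 / (2 * (2 * s))) := by
        gcongr
    _ = √2 * exp (s + |y|) * heatKernel (2 * s) (y - z) := by
        rw [exp_add, heatKernel]; ring

lemma integral_sq_heatKernel_sub_mul_exp_abs_le {s α : ℝ} (hs : 0 < s) (hα0 : 0 ≤ α)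
    (hα1 : α ≤ 1) (y₁ y₂ : ℝ) :
    ∫ z, (heatKernel s (y₁ - z) - heatKernel s (y₂ - z)) ^ 2 * exp |z| ≤
      2 * √2 * exp (s + max |y₁| |y₂|) * |y₁ - y₂| ^ α * s ^ (-(1 + α) / 2) := by
  set A := |y₁ - y₂| ^ α * s ^ (-(1 + α) / 2)
  set B := √2 * exp (s + max |y₁| |y₂|)
  have hweight : ∀ y, |y| ≤ max |y₁| |y₂| → ∀ z,
      heatKernel s (y - z) * exp |z| ≤ B * heatKernel (2 * s) (y - z) := fun y hy z =>
    (heatKernel_sub_mul_exp_abs_le hs y z).trans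
      (mul_le_mul_of_nonneg_right (by simp only [B]; gcongr) (heatKernel_nonneg _ _))
  have hpointwise : ∀ z, (heatKernel s (y₁ - z) - heatKernel s (y₂ - z)) ^ 2 * exp |z| ≤
      A * B * (heatKernel (2 * s) (y₁ - z) + heatKernel (2 * s) (y₂ - z)) := fun z =>
    calc (heatKernel s (y₁ - z) - heatKernel s (y₂ - z)) ^ 2 * exp |z|
        ≤ A * (heatKernel s (y₁ - z) * exp |z| + heatKernel s (y₂ - z) * exp |z|) := by
          have := sq_heatKernel_sub_le hs hα0 hα1 (y₁ - z) (y₂ - z)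
          rw [sub_sub_sub_cancel_right] at this
          rw [← add_mul, ← mul_assoc]
          gcongr
      _ ≤ A * (B * heatKernel (2 * s) (y₁ - z) + B * heatKernel (2 * s) (y₂ - z)) :=
          mul_le_mul_of_nonneg_left (add_le_add (hweight y₁ (le_max_left _ _) z)
            (hweight y₂ (le_max_right _ _) z)) (by positivity)
      _ = A * B * (heatKernel (2 * s) (y₁ - z) + heatKernel (2 * s) (y₂ - z)) := by ring
  have h2s : 0 < 2 * s := by positivity
  calc ∫ z, (heatKernel s (y₁ - z) - heatKernel s (y₂ - z)) ^ 2 * exp |z|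
      ≤ ∫ z, A * B * (heatKernel (2 * s) (y₁ - z) + heatKernel (2 * s) (y₂ - z)) :=
        integral_mono_of_nonneg (ae_of_all _ fun z => by positivity)
          (((integrable_heatKernel_sub h2s.le y₁).add
            (integrable_heatKernel_sub h2s.le y₂)).const_mul _) (ae_of_all _ hpointwise)
    _ = 2 * √2 * exp (s + max |y₁| |y₂|) * |y₁ - y₂| ^ α * s ^ (-(1 + α) / 2) := by
        rw [integral_const_mul, integral_add (integrable_heatKernel_sub h2s.le y₁)
          (integrable_heatKernel_sub h2s.le y₂), integral_heatKernel_sub h2s,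
          integral_heatKernel_sub h2s]
        ring

lemma intervalIntegral_le_of_le_mul_rpow {f : ℝ → ℝ} {C r t : ℝ} (ht : 0 ≤ t) (hr : -1 < r)
    (hf0 : ∀ s ∈ Set.Ioc 0 t, 0 ≤ f s) (hf : ∀ s ∈ Set.Ioc 0 t, f s ≤ C * s ^ r) :
    ∫ s in (0 : ℝ)..t, f s ≤ C * (t ^ (r + 1) / (r + 1)) := by
  have hint : IntervalIntegrable (fun s => C * s ^ r) volume 0 t :=
    (intervalIntegral.intervalIntegrable_rpow' hr).const_mul C
  calc ∫ s in (0 : ℝ)..t, f s ≤ ∫ s in (0 : ℝ)..t, C * s ^ r := by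
        rw [intervalIntegral.integral_of_le ht, intervalIntegral.integral_of_le ht]
        exact integral_mono_of_nonneg ((ae_restrict_iff' measurableSet_Ioc).2 (ae_of_all _ hf0))
          hint.1 ((ae_restrict_iff' measurableSet_Ioc).2 (ae_of_all _ hf))
    _ = C * (t ^ (r + 1) / (r + 1)) := by
        rw [intervalIntegral.integral_const_mul, integral_rpow (.inl hr),
          zero_rpow (by linarith), sub_zero]

/-- For every `α ∈ (0,1)` and `T > 0` there is a constant `K = K(α,T)` such that for all
`0 < t ≤ T` and all `y₁, y₂ ∈ ℝ`,
`∫_0^t ∫ (p_s(y₁−z) − p_s(y₂−z))² e^{|z|} dz ds ≤ K e^{max(|y₁|,|y₂|)} |y₁−y₂|^α`. -/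
theorem heatKernel_difference_integral_bound (α T : ℝ) (hα : α ∈ Set.Ioo (0 : ℝ) 1)
    (hT : 0 < T) :
    ∃ K : ℝ, 0 < K ∧ ∀ t : ℝ, 0 < t → t ≤ T → ∀ y₁ y₂ : ℝ,
      (∫ s in (0 : ℝ)..t,
          ∫ z : ℝ, (heatKernel s (y₁ - z) - heatKernel s (y₂ - z)) ^ 2 * Real.exp |z|) ≤
        K * Real.exp (max |y₁| |y₂|) * |y₁ - y₂| ^ α := by
  obtain ⟨hα0, hα1⟩ := hα
  have hr : 0 < -(1 + α) / 2 + 1 := by linarith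
  set r := -(1 + α) / 2
  refine ⟨2 * √2 * exp T * (T ^ (r + 1) / (r + 1)), by positivity, fun t ht htT y₁ y₂ => ?_⟩
  calc _ ≤ 2 * √2 * exp (T + max |y₁| |y₂|) * |y₁ - y₂| ^ α * (t ^ (r + 1) / (r + 1)) :=
        intervalIntegral_le_of_le_mul_rpow ht.le (by linarith)
          (fun s _ => integral_nonneg fun z => by positivity) fun s hs =>
          (integral_sq_heatKernel_sub_mul_exp_abs_le hs.1 hα0.le hα1.le y₁ y₂).trans
            (by gcongr; exacts [rpow_nonneg hs.1.le _, hs.2.trans htT])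
    _ ≤ 2 * √2 * exp (T + max |y₁| |y₂|) * |y₁ - y₂| ^ α * (T ^ (r + 1) / (r + 1)) := by
        gcongr
    _ = 2 * √2 * exp T * (T ^ (r + 1) / (r + 1)) * exp (max |y₁| |y₂|) * |y₁ - y₂| ^ α := by
        rw [exp_add]; ring
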